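/- For all integers m ≥ 2 and x ≥ 1, the cardinality of the LOCO code satisfies the recursion N(m,x) = N(m−1,x) + N(m−x−1,x), where any term N(k,x) with k ≤ 1 is interpreted, by convention, as 2. -/

import Mathlib

/-- `noForbidden m x c` says the binary word `c = (c_{m-1}, …, c_0)` contains no contiguous
subword of the form `0 1^y 0` or `1 0^y 1` for any `1 ≤ y ≤ x`. -/
def noForbidden (m x : ℕ) (c : Fin m → Bool) : Prop :=
  ∀ j y : ℕ, 1 ≤ y → y ≤ x → (h : j + y + 1 < m) →
    ¬ ((∀ k, 1 ≤ k → (hk : k ≤ y) → c ⟨j + k, by omega⟩ = ! c ⟨j, by omega⟩) ∧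
        c ⟨j + y + 1, h⟩ = c ⟨j, by omega⟩)

/-- `N(m, x)`: the cardinality of the LOCO code `C(m, x)`. -/
noncomputable def locoN (m x : ℕ) : ℕ := Nat.card {c : Fin m → Bool // noForbidden m x c}

/-- `N(k, x)` extended to integer `k` by the convention `N(k, x) = 2` for `k ≤ 1`. -/
noncomputable def Nex (k : ℤ) (x : ℕ) : ℤ := if k ≤ 1 then 2 else (locoN k.toNat x : ℤ)

/-- Strict lexicographic order on binary words, comparing bits from `c_{m-1}`
(most significant) down to `c_0`, with `0 < 1`. -/
def lexLt (m : ℕ) (d c : Fin m → Bool) : Prop :=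
  ∃ i : Fin m, d i = false ∧ c i = true ∧ ∀ j : Fin m, (i : ℕ) < (j : ℕ) → d j = c j

/-- The index `g(m, x, c)` of a codeword: the number of codewords of `C(m, x)` that
precede `c` in lexicographic order. -/
noncomputable def locoIdx (m x : ℕ) (c : Fin m → Bool) : ℕ :=
  Nat.card {d : Fin m → Bool // noForbidden m x d ∧ lexLt m d c}

/-!
Split the codewords of length `n + 2` according to whether their two top bits agree. If they
do, deleting the top bit is a bijection onto `C(n + 1, x)`, whose inverse repeats the top bit.
If they differ, the forbidden patterns force the `x + 1` bits below the top bit to agree (all of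
them, when the word is short), so the word is determined by its lowest `n - x + 1` bits, which
form an arbitrary codeword of `C(n - x + 1, x)`. Truncated subtraction makes `n - x + 1 = 1` for
short words, matching the convention `N(k, x) = 2 = |C(1, x)|` for `k ≤ 1`.
-/

theorem noForbidden.castLE {m n x : ℕ} {c : Fin m → Bool} (hc : noForbidden m x c)
    (h : n ≤ m) : noForbidden n x (c ∘ Fin.castLE h) :=
  fun j y hy1 hy2 hj => hc j y hy1 hy2 (by omega)

/-- The highest bit below bit `n` that differs from it would start a forbidden pattern ending
at the top bit. -/
theorem noForbidden.eq_of_top_ne {n x : ℕ} {c : Fin (n + 2) → Bool}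
    (hc : noForbidden (n + 2) x c) (htop : c (Fin.last (n + 1)) ≠ c ⟨n, by omega⟩)
    {i : ℕ} (hin : i ≤ n) (hix : n ≤ i + x) : c ⟨i, by omega⟩ = c ⟨n, by omega⟩ := by
  suffices h : ∀ t ≤ n - i, c ⟨n - t, by omega⟩ = c ⟨n, by omega⟩ by
    simpa [show n - (n - i) = i by omega] using h (n - i) le_rfl
  intro t
  induction t using Nat.strong_induction_on with
  | _ t ih =>
    intro ht
    by_contra hne
    have ht0 : t ≠ 0 := by rintro rfl; exact hne rfl
    refine hc (n - t) t (by omega) (by omega) (by omega) ⟨?_, ?_⟩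
    · intro s hs1 hs2
      rw [Bool.eq_not_iff.mpr hne]
      simpa [show n - t + s = n - (t - s) by omega] using (ih (t - s) (by omega) (by omega))
    · have : n - t + t + 1 = n + 1 := by omega
      simp only [this]
      exact (Bool.eq_not_iff.mpr htop).trans (Bool.eq_not_iff.mpr hne).symm

def padLast {α : Type*} {k : ℕ} (d : Fin (k + 1) → α) (m : ℕ) : Fin m → α :=
  fun i => d ⟨min i k, by omega⟩

theorem noForbidden_padLast {k m x : ℕ} {d : Fin (k + 1) → Bool}
    (hd : noForbidden (k + 1) x d) : noForbidden m x (padLast d m) := by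
  rintro j y hy1 hy2 hj ⟨hrun, hend⟩
  by_cases hk : j + y + 1 < k + 1
  · refine hd j y hy1 hy2 hk ⟨fun t ht1 ht2 => ?_, ?_⟩
    · simpa [padLast, show min (j + t) k = j + t by omega, show min j k = j by omega]
        using hrun t ht1 ht2
    · simpa [padLast, show min (j + y + 1) k = j + y + 1 by omega, show min j k = j by omega]
        using hend
  · have hlast := hrun y hy1 le_rfl
    simp only [padLast, show min (j + y) k = k by omega,
      show min (j + y + 1) k = k by omega] at hlast hend
    rw [hend] at hlast
    exact Bool.not_ne_self _ hlast.symm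

def padLastFlip {k : ℕ} (d : Fin (k + 1) → Bool) (n : ℕ) : Fin (n + 2) → Bool :=
  fun i => if (i : ℕ) = n + 1 then !d (Fin.last k) else padLast d (n + 2) i

theorem padLastFlip_last {k n : ℕ} (d : Fin (k + 1) → Bool) :
    padLastFlip d n (Fin.last (n + 1)) = !d (Fin.last k) :=
  if_pos rfl

theorem padLastFlip_castSucc {k n : ℕ} (d : Fin (k + 1) → Bool) (i : Fin (n + 1)) :
    padLastFlip d n i.castSucc = padLast d (n + 2) i.castSucc :=
  if_neg (Nat.ne_of_lt i.2)

theorem noForbidden_padLastFlip {k n x : ℕ} {d : Fin (k + 1) → Bool}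
    (hd : noForbidden (k + 1) x d) (hk : k = 0 ∨ k + x ≤ n) :
    noForbidden (n + 2) x (padLastFlip d n) := by
  rintro j y hy1 hy2 hj ⟨hrun, hend⟩
  by_cases htop : j + y + 1 = n + 1
  · simp only [padLastFlip, padLast, htop, if_true, show j ≠ n + 1 by omega, if_false] at hend
    have hjk : j < k := by
      by_contra! hkj
      simp [show min j k = k by omega, Fin.last] at hend
    omega
  · refine noForbidden_padLast hd j y hy1 hy2 hj ⟨fun t ht1 ht2 => ?_, ?_⟩
    · simpa [padLastFlip, show j + t ≠ n + 1 by omega, show j ≠ n + 1 by omega]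
        using hrun t ht1 ht2
    · simpa [padLastFlip, show j + y ≠ n by omega, show j ≠ n + 1 by omega] using hend

theorem Nat.card_subtype_eq_card_and_add_card_and_not {α : Type*} [Finite α]
    (p q : α → Prop) :
    Nat.card {a // p a} = Nat.card {a // p a ∧ q a} + Nat.card {a // p a ∧ ¬ q a} := by
  classical
  rw [← Nat.card_sum]
  exact Nat.card_congr ((Equiv.sumCompl fun a : {a // p a} => q a).symm.trans
    (Equiv.sumCongr (Equiv.subtypeSubtypeEquivSubtypeInter p q)
      (Equiv.subtypeSubtypeEquivSubtypeInter p fun a => ¬ q a)))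

def topEqEquiv (n x : ℕ) :
    {c : Fin (n + 2) → Bool //
      noForbidden (n + 2) x c ∧ c (Fin.last (n + 1)) = c ⟨n, by omega⟩}
      ≃ {d : Fin (n + 1) → Bool // noForbidden (n + 1) x d} where
  toFun c := ⟨c.1 ∘ Fin.castLE (by omega), c.2.1.castLE _⟩
  invFun d := ⟨padLast d.1 (n + 2), noForbidden_padLast d.2, by simp [padLast, Fin.last]⟩
  left_inv := by
    rintro ⟨c, -, htop⟩
    ext i
    induction i using Fin.lastCases with
    | last => simpa [padLast] using htop.symm
    | cast i => exact congrArg c (Fin.ext (min_eq_left (Nat.lt_succ_iff.mp i.2)))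
  right_inv := by
    rintro ⟨d, -⟩
    ext i
    simp [padLast, show min (i : ℕ) n = i by omega]

def topNeEquiv (n x : ℕ) :
    {c : Fin (n + 2) → Bool //
      noForbidden (n + 2) x c ∧ c (Fin.last (n + 1)) ≠ c ⟨n, by omega⟩}
      ≃ {d : Fin (n - x + 1) → Bool // noForbidden (n - x + 1) x d} where
  toFun c := ⟨c.1 ∘ Fin.castLE (by omega), c.2.1.castLE _⟩
  invFun d := ⟨padLastFlip d.1 n, noForbidden_padLastFlip d.2 (by omega), by
    change padLastFlip d.1 n (Fin.last (n + 1)) ≠ padLastFlip d.1 n (Fin.last n).castSucc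
    rw [padLastFlip_last, padLastFlip_castSucc]
    rw [show padLast d.1 (n + 2) (Fin.last n).castSucc = d.1 (Fin.last (n - x)) from
      congrArg d.1 (Fin.ext (min_eq_right (Nat.sub_le n x)))]
    exact Bool.not_ne_self _⟩
  left_inv := by
    rintro ⟨c, hc, htop⟩
    have hrun {i : ℕ} (hi : n - x ≤ i) (hin : i ≤ n) :
        c ⟨i, by omega⟩ = c ⟨n, by omega⟩ :=
      hc.eq_of_top_ne htop hin (by omega)
    ext i
    induction i using Fin.lastCases with
    | last =>
      calc padLastFlip _ n (Fin.last (n + 1)) = !c ⟨n - x, by omega⟩ := padLastFlip_last _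
        _ = !c ⟨n, by omega⟩ := by rw [hrun le_rfl (Nat.sub_le n x)]
        _ = c (Fin.last (n + 1)) := (Bool.eq_not_iff.mpr htop).symm
    | cast i =>
      refine (padLastFlip_castSucc _ i).trans ?_
      rcases le_or_gt (i : ℕ) (n - x) with hi | hi
      · exact congrArg c (Fin.ext (min_eq_left hi))
      · calc c ⟨min i (n - x), by omega⟩ = c ⟨n - x, by omega⟩ :=
              congrArg c (Fin.ext (min_eq_right hi.le))
          _ = c ⟨n, by omega⟩ := hrun le_rfl (Nat.sub_le n x)
          _ = c i.castSucc := (hrun hi.le (Nat.lt_succ_iff.mp i.2)).symm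
  right_inv := by
    rintro ⟨d, -⟩
    ext i
    simp [padLastFlip, padLast, show (i : ℕ) ≠ n + 1 by omega,
      show min (i : ℕ) (n - x) = i by omega]

theorem locoN_add_two (n x : ℕ) : locoN (n + 2) x = locoN (n + 1) x + locoN (n - x + 1) x := by
  rw [locoN, Nat.card_subtype_eq_card_and_add_card_and_not _
      fun c : Fin (n + 2) → Bool => c (Fin.last (n + 1)) = c ⟨n, by omega⟩,
    Nat.card_congr (topEqEquiv n x), Nat.card_congr (topNeEquiv n x), locoN, locoN]

theorem locoN_one (x : ℕ) : locoN 1 x = 2 := by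
  have hall (c : Fin 1 → Bool) : noForbidden 1 x c := fun _ _ _ _ h => absurd h (by omega)
  rw [locoN, Nat.card_congr (Equiv.subtypeUnivEquiv hall), Nat.card_eq_fintype_card,
    Fintype.card_fun, Fintype.card_bool, Fintype.card_fin, pow_one]

theorem Nex_eq_locoN (k : ℤ) (x : ℕ) : Nex k x = locoN (max k.toNat 1) x := by
  unfold Nex
  split_ifs with hk
  · rw [show max k.toNat 1 = 1 by omega, locoN_one, Nat.cast_ofNat]
  · rw [show max k.toNat 1 = k.toNat by omega]

theorem loco_card_recursion (m x : ℕ) (hm : 2 ≤ m) :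
    Nex (m : ℤ) x = Nex ((m : ℤ) - 1) x + Nex ((m : ℤ) - (x : ℤ) - 1) x := by
  obtain ⟨n, rfl⟩ : ∃ n, m = n + 2 := ⟨m - 2, by omega⟩
  simp only [Nex_eq_locoN]
  rw [show max ((n + 2 : ℕ) : ℤ).toNat 1 = n + 2 by omega,
    show max (((n + 2 : ℕ) : ℤ) - 1).toNat 1 = n + 1 by omega,
    show max (((n + 2 : ℕ) : ℤ) - x - 1).toNat 1 = n - x + 1 by omega,
    locoN_add_two, Nat.cast_add]
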